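/- Every A-strict episturmian word over a finite alphabet A is fine: there exists an infinite word s such that for every letter a ∈ A and every total order on A with a = min(A), min(t) = a·s. -/

import Mathlib

/-- The prefix of length `k` of an infinite word `w : ℕ → A`. -/
def pref {A : Type*} (w : ℕ → A) (k : ℕ) : List A := (List.range k).map w

/-- `u` is a (finite) factor of the infinite word `w`. -/
def IsFactor {A : Type*} (w : ℕ → A) (u : List A) : Prop :=
  ∃ i : ℕ, u = (List.range u.length).map (fun j => w (i + j))

/-- Prepend a letter to an infinite word. -/
def consW {A : Type*} (a : A) (s : ℕ → A) : ℕ → A := fun n => match n with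
  | 0 => a
  | n + 1 => s n

/-- Concatenation of a finite word with an infinite word. -/
def catW {A : Type*} (u : List A) (w : ℕ → A) : ℕ → A := fun n =>
  if h : n < u.length then u.get ⟨n, h⟩ else w (n - u.length)

/-- `u` is the lexicographically smallest factor of `w` of length `k`,
w.r.t. the strict order `lt` on letters. -/
def IsMinFactor {A : Type*} (lt : A → A → Prop) (w : ℕ → A) (k : ℕ) (u : List A) : Prop :=
  IsFactor w u ∧ u.length = k ∧
    ∀ v, IsFactor w v → v.length = k → u = v ∨ List.Lex lt u v

/-- `u` is the lexicographically greatest factor of `w` of length `k`. -/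
def IsMaxFactor {A : Type*} (lt : A → A → Prop) (w : ℕ → A) (k : ℕ) (u : List A) : Prop :=
  IsFactor w u ∧ u.length = k ∧
    ∀ v, IsFactor w v → v.length = k → u = v ∨ List.Lex lt v u

/-- `m = min(w)`: every length-`k` prefix of `m` is the lexicographically
smallest factor of `w` of length `k`. -/
def IsMinWord {A : Type*} (lt : A → A → Prop) (w m : ℕ → A) : Prop :=
  ∀ k : ℕ, IsMinFactor lt w k (pref m k)

/-- `m = max(w)`. -/
def IsMaxWord {A : Type*} (lt : A → A → Prop) (w m : ℕ → A) : Prop :=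
  ∀ k : ℕ, IsMaxFactor lt w k (pref m k)

/-- The letter `z` is separating for `t`: every length-2 factor of `t` contains `z`. -/
def Separating {A : Type*} (z : A) (t : ℕ → A) : Prop :=
  ∀ u, IsFactor t u → u.length = 2 → z ∈ u

/-- The episturmian morphism `Ψ_z` on finite words: `z ↦ z`, `x ↦ zx` for `x ≠ z`. -/
def psiL {A : Type*} [DecidableEq A] (z : A) (u : List A) : List A :=
  u.flatMap (fun x => if x = z then [z] else [z, x])

/-- `t = Ψ_z(y)` for infinite words: the `Ψ_z`-image of every prefix of `y`
is a prefix of `t`. -/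
def PsiImage {A : Type*} [DecidableEq A] (z : A) (y t : ℕ → A) : Prop :=
  ∀ n : ℕ, psiL z (pref y n) = pref t (psiL z (pref y n)).length

/-- `u` is a left special factor of `w`. -/
def LeftSpecial {A : Type*} (w : ℕ → A) (u : List A) : Prop :=
  ∃ a b : A, a ≠ b ∧ IsFactor w (a :: u) ∧ IsFactor w (b :: u)

/-- `u` is a right special factor of `w`. -/
def RightSpecial {A : Type*} (w : ℕ → A) (u : List A) : Prop :=
  ∃ a b : A, a ≠ b ∧ IsFactor w (u ++ [a]) ∧ IsFactor w (u ++ [b])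

/-- `w` is a standard episturmian word: factors closed under reversal and
every left special factor is a prefix. -/
def StdEpisturmian {A : Type*} (w : ℕ → A) : Prop :=
  (∀ u, IsFactor w u → IsFactor w u.reverse) ∧
  (∀ u, LeftSpecial w u → u = pref w u.length)

/-- `w` is an `A`-strict standard episturmian word (standard Arnoux-Rauzy sequence):
standard episturmian and every prefix has every letter as a left extension. -/
def StrictStdEpisturmian {A : Type*} (w : ℕ → A) : Prop :=
  StdEpisturmian w ∧ ∀ (n : ℕ) (a : A), IsFactor w (a :: pref w n)

/-- `w` is episturmian: factors closed under reversal and at most one right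
special factor of each length. -/
def Episturmian {A : Type*} (w : ℕ → A) : Prop :=
  (∀ u, IsFactor w u → IsFactor w u.reverse) ∧
  (∀ u v, RightSpecial w u → RightSpecial w v → u.length = v.length → u = v)

/-- `w` is an `A`-strict episturmian word: it has the same set of factors as some
`A`-strict standard episturmian word. -/
def StrictEpisturmian {A : Type*} (w : ℕ → A) : Prop :=
  ∃ s : ℕ → A, StrictStdEpisturmian s ∧ ∀ u, IsFactor w u ↔ IsFactor s u

/-- `t` is fine: there is an infinite word `s` such that for every total order on the
alphabet and every letter `a` minimal for that order, `min(t) = a·s`. -/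
def Fine {A : Type*} (t : ℕ → A) : Prop :=
  ∃ s : ℕ → A, ∀ (l : LinearOrder A) (a : A), (∀ b, l.le a b) →
    IsMinWord l.lt t (consW a s)


/-! The witness is the standard word `s` itself. For the least letter `a`, `a · s[0, n)` is a
factor by strictness, and it is the least one: if a factor `a · p · c` with `p = s[0, j)` leaves
`a · s` at a letter `c ≠ s j`, then `a · p` is right special (strictness also gives `a · p · s j`),
so by closure under reversal `reverse p · a` is left special, hence equal to the prefix `p · s j`.
Thus `s j = a` is the least letter and `c > s j`. -/

section

variable {A : Type*}

@[simp] lemma length_pref (w : ℕ → A) (n : ℕ) : (pref w n).length = n := by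
  simp [pref]

lemma pref_add (w : ℕ → A) (m n : ℕ) :
    pref w (m + n) = pref w m ++ pref (fun j => w (m + j)) n := by
  simp [pref, List.range_add, Function.comp_def]

lemma pref_succ (w : ℕ → A) (n : ℕ) : pref w (n + 1) = pref w n ++ [w n] := by
  simp [pref, List.range_succ]

lemma pref_consW (a : A) (s : ℕ → A) (n : ℕ) : pref (consW a s) (n + 1) = a :: pref s n := by
  simp [pref, List.range_succ_eq_map, Function.comp_def, consW]

lemma eq_pref_of_pref_eq_append_cons {s : ℕ → A} {n : ℕ} {u l : List A} {d : A}
    (h : pref s n = u ++ d :: l) : u = pref s u.length ∧ d = s u.length := by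
  have hn : u.length < n := by
    have := congrArg List.length h
    simp at this
    omega
  have := congrArg (List.take (u.length + 1)) h
  rw [pref, ← List.map_take, List.take_range, Nat.min_eq_left hn, ← pref, pref_succ] at this
  simp only [List.take_append, List.take_of_length_le (Nat.le_succ _),
    Nat.add_sub_cancel_left] at this
  simpa using (List.append_inj' this.symm rfl)

lemma IsFactor.of_isPrefix {w : ℕ → A} {u v : List A} (hv : IsFactor w v) (huv : u <+: v) :
    IsFactor w u := by
  obtain ⟨i, hi⟩ := hv
  obtain ⟨r, rfl⟩ := huv
  rw [List.length_append] at hi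
  exact ⟨i, (List.append_inj (hi.trans (pref_add _ _ _)) (by simp [pref])).1⟩

lemma RightSpecial.leftSpecial_reverse {w : ℕ → A} {u : List A}
    (hrev : ∀ u, IsFactor w u → IsFactor w u.reverse) (h : RightSpecial w u) :
    LeftSpecial w u.reverse := by
  obtain ⟨a, b, hab, ha, hb⟩ := h
  exact ⟨a, b, hab, by simpa using hrev _ ha, by simpa using hrev _ hb⟩

lemma List.Lex.exists_append_cons {r : A → A → Prop} {l₁ l₂ : List A} (h : List.Lex r l₁ l₂)
    (hlen : l₂.length ≤ l₁.length) :
    ∃ u c d l₁' l₂', l₁ = u ++ c :: l₁' ∧ l₂ = u ++ d :: l₂' ∧ r c d := by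
  induction h with
  | nil => simp at hlen
  | @cons a l₁ l₂ _ ih =>
    obtain ⟨u, c, d, l₁', l₂', rfl, rfl, hcd⟩ := ih (by simpa using hlen)
    exact ⟨a :: u, c, d, l₁', l₂', rfl, rfl, hcd⟩
  | rel hab => exact ⟨[], _, _, _, _, rfl, rfl, hab⟩

lemma StdEpisturmian.eq_of_isFactor_cons_pref_append {s : ℕ → A} (hs : StdEpisturmian s)
    {x c : A} {j : ℕ} (hx : IsFactor s (x :: pref s (j + 1)))
    (hc : IsFactor s (x :: (pref s j ++ [c]))) (hcj : c ≠ s j) : x = s j := by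
  have hright : RightSpecial s (x :: pref s j) :=
    ⟨s j, c, hcj.symm, by simpa [pref_succ] using hx, by simpa using hc⟩
  have hpref : (pref s j).reverse ++ [x] = pref s j ++ [s j] := by
    simpa [pref_succ] using hs.2 _ (hright.leftSpecial_reverse hs.1)
  simpa using (List.append_inj' hpref rfl).2

lemma StrictStdEpisturmian.isMinFactor_cons_pref [LinearOrder A] {s : ℕ → A}
    (hs : StrictStdEpisturmian s) {a : A} (ha : ∀ b, a ≤ b) (n : ℕ) :
    IsMinFactor (· < ·) s (n + 1) (a :: pref s n) := by
  refine ⟨hs.2 n a, by simp, fun v hv hlen => ?_⟩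
  rcases lt_trichotomy (a :: pref s n) v with hlt | heq | hgt
  · exact Or.inr hlt
  · exact Or.inl heq
  obtain ⟨u, c, d, v', p, rfl, hp, hcd⟩ := hgt.exists_append_cons (by simp [hlen])
  -- `v` branches off below `a · s` with `c < d`, but `d` is always the least letter `a`.
  refine absurd (ha c) (not_le.mpr (hcd.trans_le ?_))
  rcases u with _ | ⟨b, u⟩
  · exact (List.cons.inj hp).1.ge
  simp only [List.cons_append, List.cons.injEq] at hp
  obtain ⟨rfl, hp⟩ := hp
  obtain ⟨hu, rfl⟩ := eq_pref_of_pref_eq_append_cons hp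
  have hc : IsFactor s (a :: (pref s u.length ++ [c])) := hv.of_isPrefix ⟨v', by simp [← hu]⟩
  exact (hs.1.eq_of_isFactor_cons_pref_append (hs.2 _ a) hc hcd.ne).ge

lemma StrictStdEpisturmian.isMinWord_consW [LinearOrder A] {s : ℕ → A}
    (hs : StrictStdEpisturmian s) {a : A} (ha : ∀ b, a ≤ b) :
    IsMinWord (· < ·) s (consW a s) := by
  rintro (_ | n)
  · exact ⟨⟨0, rfl⟩, rfl, fun v _ hv => Or.inl (List.length_eq_zero_iff.mp hv).symm⟩
  · rw [pref_consW]
    exact hs.isMinFactor_cons_pref ha n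

lemma isMinWord_congr {lt : A → A → Prop} {t s m : ℕ → A}
    (h : ∀ u, IsFactor t u ↔ IsFactor s u) : IsMinWord lt t m ↔ IsMinWord lt s m := by
  simp only [IsMinWord, IsMinFactor, h]

end

theorem stmt_9_general {A : Type*} (t : ℕ → A) (h : StrictEpisturmian t) :
    Fine t := by
  obtain ⟨s, hs, hts⟩ := h
  refine ⟨s, fun l a ha => ?_⟩
  let _ : LinearOrder A := l
  exact (isMinWord_congr hts).mpr (hs.isMinWord_consW ha)

/-- Every `A`-strict episturmian word is fine. -/
theorem stmt_9 {A : Type*} [Fintype A] (t : ℕ → A) (h : StrictEpisturmian t) :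
    Fine t :=
  stmt_9_general t h
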